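/- arXiv:1311.4296 — 2 statements merged into one kernel-verified Lean document; each statement's English description precedes it below -/
import Mathlib

section
/- Let F be a submodular function on V with F(∅) = 0, f its Lovász extension, and x* the unique minimizer of f(x) + (1/2)‖x‖² over ℝ^V. Let λ be any value attained by some coordinate of x*, and set S' = {i ∈ V : x*_i ≥ λ} and S = {i ∈ V : x*_i > λ}. Then λ = − (F(S') − F(S)) / (|S'| − |S|). -/
/-!
Let `C = {x* = λ}`. Shifting the coordinates in `C` by a small `ε` does not change the order of
the coordinates of `x*`, so along this direction `f` is affine with slope `F(S') - F(S)` (the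
direction is `1_{S'} - 1_S`, and the Lovász extension of an indicator `1_T` is `F(T) - F(∅)`).
Hence `ε ↦ f(x* + ε 1_C) + ½‖x* + ε 1_C‖²` coincides near `0` with a quadratic whose derivative
at `0` is `F(S') - F(S) + λ |C|`; it vanishes because `0` is a minimum, and `|C| = |S'| - |S| > 0`.
-/
open Finset
open Finset

def Submodular {n : ℕ} (F : Finset (Fin n) → ℝ) : Prop :=
  ∀ S T : Finset (Fin n), F (S ∪ T) + F (S ∩ T) ≤ F S + F T

def basePolytope {n : ℕ} (F : Finset (Fin n) → ℝ) : Set (Fin n → ℝ) :=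
  {y | (∀ S : Finset (Fin n), ∑ i ∈ S, y i ≤ F S) ∧ ∑ i, y i = F Finset.univ}

def SortsDesc {n : ℕ} (x : Fin n → ℝ) (σ : Equiv.Perm (Fin n)) : Prop :=
  ∀ j k : Fin n, j ≤ k → x (σ k) ≤ x (σ j)

def lovaszVal {n : ℕ} (F : Finset (Fin n) → ℝ) (x : Fin n → ℝ) (σ : Equiv.Perm (Fin n)) : ℝ :=
  ∑ k : Fin n, x (σ k) *
    (F ((Finset.univ.filter (fun j => j ≤ k)).image ⇑σ)
      - F ((Finset.univ.filter (fun j => j < k)).image ⇑σ))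

def IsLovasz {n : ℕ} (F : Finset (Fin n) → ℝ) (f : (Fin n → ℝ) → ℝ) : Prop :=
  ∀ (x : Fin n → ℝ) (σ : Equiv.Perm (Fin n)), SortsDesc x σ → f x = lovaszVal F x σ

open Filter Topology

lemma Fin.mem_iff_lt_card_of_isLowerSet {n : ℕ} {Q : Finset (Fin n)}
    (hQ : IsLowerSet (Q : Set (Fin n))) (k : Fin n) : k ∈ Q ↔ (k : ℕ) < #Q := by
  constructor
  · intro hk
    have hIic : Iic k ⊆ Q := fun j hj => hQ (mem_Iic.mp hj) hk
    have := card_le_card hIic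
    rw [Fin.card_Iic] at this
    omega
  · intro hk
    by_contra hkQ
    have hIio : Q ⊆ Iio k := fun j hj =>
      mem_Iio.mpr (lt_of_not_ge fun hkj => hkQ (hQ hkj hj))
    have := card_le_card hIio
    rw [Fin.card_Iio] at this
    omega

lemma exists_sortsDesc {n : ℕ} (x : Fin n → ℝ) : ∃ σ : Equiv.Perm (Fin n), SortsDesc x σ :=
  ⟨Fin.revPerm.trans (Tuple.sort x), fun _ _ hjk => by
    simpa using Tuple.monotone_sort x (Fin.rev_le_rev.mpr hjk)⟩

section lovaszVal

variable {n : ℕ} (F : Finset (Fin n) → ℝ) (σ : Equiv.Perm (Fin n))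

lemma lovaszVal_add (x y : Fin n → ℝ) :
    lovaszVal F (x + y) σ = lovaszVal F x σ + lovaszVal F y σ := by
  simp only [lovaszVal, Pi.add_apply, add_mul, sum_add_distrib]

lemma lovaszVal_smul (c : ℝ) (x : Fin n → ℝ) :
    lovaszVal F (c • x) σ = c * lovaszVal F x σ := by
  simp only [lovaszVal, Pi.smul_apply, smul_eq_mul, mul_sum, mul_assoc]

lemma lovaszVal_sub (x y : Fin n → ℝ) :
    lovaszVal F (x - y) σ = lovaszVal F x σ - lovaszVal F y σ := by
  simp only [lovaszVal, Pi.sub_apply, sub_mul, sum_sub_distrib]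

lemma lovaszVal_eq_sum_prefix (x : Fin n → ℝ) :
    lovaszVal F x σ = ∑ k : Fin n, x (σ k) *
      (F ((univ.filter fun j : Fin n => (j : ℕ) < k + 1).image σ)
        - F ((univ.filter fun j : Fin n => (j : ℕ) < k).image σ)) := by
  unfold lovaszVal
  congr! 6 with k _ j
  exact Nat.lt_succ_iff.symm

variable {σ}

lemma SortsDesc.boole_iff_lt_card {p : Fin n → Prop} [DecidablePred p]
    (hσ : SortsDesc (fun i => if p i then (1 : ℝ) else 0) σ) (k : Fin n) :
    p (σ k) ↔ (k : ℕ) < #(univ.filter p) := by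
  have hlower : IsLowerSet ((univ.filter (p ∘ σ) : Finset (Fin n)) : Set (Fin n)) := by
    intro k j hjk hk
    simp only [coe_filter, mem_univ, true_and, Set.mem_ofPred_eq, Function.comp] at hk ⊢
    by_contra hj
    have := hσ j k hjk
    simp only [hk, hj, if_true, if_false] at this
    norm_num at this
  have hcard : #(univ.filter (p ∘ σ)) = #(univ.filter p) :=
    card_equiv σ fun k => by simp
  rw [← hcard, ← Fin.mem_iff_lt_card_of_isLowerSet hlower]
  simp

lemma lovaszVal_boole_of_sortsDesc {p : Fin n → Prop} [DecidablePred p]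
    (hσ : SortsDesc (fun i => if p i then (1 : ℝ) else 0) σ) :
    lovaszVal F (fun i => if p i then 1 else 0) σ = F (univ.filter p) - F ∅ := by
  set t := #(univ.filter p)
  set g : ℕ → ℝ := fun s => F ((univ.filter fun j : Fin n => (j : ℕ) < s).image σ)
  have hg0 : g 0 = F ∅ := by simp [g]
  have hgt : g t = F (univ.filter p) := by
    show F _ = F _
    congr 1
    ext i
    simp only [mem_image, mem_filter, mem_univ, true_and]
    constructor
    · rintro ⟨k, hk, rfl⟩
      exact (hσ.boole_iff_lt_card k).mpr hk
    · intro hi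
      exact ⟨σ.symm i, (hσ.boole_iff_lt_card _).mp (by simpa using hi), σ.apply_symm_apply i⟩
  have htn : t ≤ n := by simpa using card_le_univ (univ.filter p)
  calc lovaszVal F (fun i => if p i then 1 else 0) σ
      = ∑ k : Fin n, if (k : ℕ) < t then g (k + 1) - g k else 0 := by
        rw [lovaszVal_eq_sum_prefix]
        refine sum_congr rfl fun k _ => ?_
        simp only [hσ.boole_iff_lt_card k]
        split_ifs <;> simp [g]
    _ = ∑ s ∈ range t, (g (s + 1) - g s) := by
        rw [Fin.sum_univ_eq_sum_range (fun s => if s < t then g (s + 1) - g s else 0),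
          ← sum_filter]
        congr 1
        ext s
        simp only [mem_filter, mem_range]
        omega
    _ = F (univ.filter p) - F ∅ := by rw [sum_range_sub, hgt, hg0]

end lovaszVal

section levelIndicator

variable {n : ℕ}

/-- The indicator of `{i | x i = c}`, written as a difference of indicators of upper level sets
so that its Lovász value telescopes (`lovaszVal_levelIndicator`). -/
noncomputable def levelIndicator (x : Fin n → ℝ) (c : ℝ) : Fin n → ℝ :=
  fun i => (if c ≤ x i then 1 else 0) - (if c < x i then 1 else 0)

variable {x : Fin n → ℝ} {c : ℝ}

lemma levelIndicator_apply (i : Fin n) :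
    levelIndicator x c i = if x i = c then 1 else 0 := by
  rcases lt_trichotomy (x i) c with h | h | h
  · simp [levelIndicator, h.ne, h.not_ge, h.not_gt]
  · simp [levelIndicator, h]
  · simp [levelIndicator, h, h.ne', h.le]

lemma sum_levelIndicator :
    ∑ i, levelIndicator x c i = #(univ.filter fun i => c ≤ x i) - #(univ.filter fun i => c < x i) := by
  simp only [levelIndicator, sum_sub_distrib, sum_boole]

lemma sum_sq_add_smul_levelIndicator (ε : ℝ) :
    ∑ i, (x + ε • levelIndicator x c) i ^ 2
      = ∑ i, x i ^ 2 + ε * (2 * c * ∑ i, levelIndicator x c i)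
        + ε ^ 2 * ∑ i, levelIndicator x c i := by
  simp only [mul_sum, ← sum_add_distrib]
  refine sum_congr rfl fun i _ => ?_
  simp only [Pi.add_apply, Pi.smul_apply, smul_eq_mul, levelIndicator_apply]
  split_ifs with h
  · rw [h]; ring
  · ring

lemma SortsDesc.comp_monotone {σ : Equiv.Perm (Fin n)} (hσ : SortsDesc x σ) {g : ℝ → ℝ}
    (hg : Monotone g) : SortsDesc (g ∘ x) σ :=
  fun j k hjk => hg (hσ j k hjk)

lemma lovaszVal_levelIndicator (F : Finset (Fin n) → ℝ) {σ : Equiv.Perm (Fin n)}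
    (hσ : SortsDesc x σ) :
    lovaszVal F (levelIndicator x c) σ
      = F (univ.filter fun i => c ≤ x i) - F (univ.filter fun i => c < x i) := by
  have hle : SortsDesc ((fun u => if c ≤ u then (1 : ℝ) else 0) ∘ x) σ :=
    hσ.comp_monotone fun u v huv => by
      split_ifs with hu hv <;> norm_num
      exact hv (hu.trans huv)
  have hlt : SortsDesc ((fun u => if c < u then (1 : ℝ) else 0) ∘ x) σ :=
    hσ.comp_monotone fun u v huv => by
      split_ifs with hu hv <;> norm_num
      exact hv (hu.trans_le huv)
  have hsub : levelIndicator x c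
      = (fun i => if c ≤ x i then (1 : ℝ) else 0) - fun i => if c < x i then 1 else 0 := rfl
  rw [hsub, lovaszVal_sub, lovaszVal_boole_of_sortsDesc F hle,
    lovaszVal_boole_of_sortsDesc F hlt]
  ring

/-- Moving the level set `{x = c}` by a small `ε` does not cross any other value of `x`, so it
keeps the order of the coordinates. -/
lemma SortsDesc.eventually_add_smul_levelIndicator {σ : Equiv.Perm (Fin n)}
    (hσ : SortsDesc x σ) : ∀ᶠ ε in 𝓝 (0 : ℝ), SortsDesc (x + ε • levelIndicator x c) σ := by
  have hgap : ∀ᶠ ε in 𝓝 (0 : ℝ), ∀ i, x i ≠ c → |ε| < |x i - c| :=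
    eventually_all.2 fun i => by
      by_cases hi : x i = c
      · exact Eventually.of_forall fun _ h => absurd hi h
      · have : |(0 : ℝ)| < |x i - c| := by simpa [sub_eq_zero] using hi
        filter_upwards [continuous_abs.continuousAt.eventually_lt continuousAt_const this]
          with ε hε _ using hε
  filter_upwards [hgap] with ε hε j k hjk
  have hxjk := hσ j k hjk
  simp only [Pi.add_apply, Pi.smul_apply, smul_eq_mul, levelIndicator_apply]
  split_ifs with hk hj hj
  · linarith
  · have hgap := hε (σ j) hj
    rw [abs_of_nonneg (by linarith : 0 ≤ x (σ j) - c)] at hgap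
    linarith [le_abs_self ε]
  · have hgap := hε (σ k) hk
    rw [abs_of_nonpos (by linarith : x (σ k) - c ≤ 0)] at hgap
    linarith [neg_abs_le ε]
  · linarith

end levelIndicator

lemma eq_zero_of_eventually_nonneg_mul_add_sq {q a : ℝ}
    (h : ∀ᶠ ε in 𝓝 (0 : ℝ), 0 ≤ ε * q + ε ^ 2 * a) : q = 0 := by
  have hmin : IsLocalMin (fun ε : ℝ => ε * q + ε ^ 2 * a) 0 := by
    filter_upwards [h] with ε hε
    simpa using hε
  have hderiv : HasDerivAt (fun ε : ℝ => ε * q + ε ^ 2 * a) q 0 := by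
    simpa using ((hasDerivAt_id' (0 : ℝ)).mul_const q).fun_add
      ((hasDerivAt_pow 2 (0 : ℝ)).mul_const a)
  exact hmin.hasDerivAt_eq_zero hderiv

theorem statement13_general {n : ℕ} (F : Finset (Fin n) → ℝ)
    (f : (Fin n → ℝ) → ℝ) (hf : IsLovasz F f)
    (xstar : Fin n → ℝ)
    (hxstar : ∀ x : Fin n → ℝ,
      f xstar + (1/2) * ∑ i, (xstar i)^2 ≤ f x + (1/2) * ∑ i, (x i)^2)
    (lam : ℝ) (hlam : ∃ j, xstar j = lam) :
    lam = -(F (Finset.univ.filter (fun i => lam ≤ xstar i))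
              - F (Finset.univ.filter (fun i => lam < xstar i))) /
      (((Finset.univ.filter (fun i => lam ≤ xstar i)).card : ℝ)
        - ((Finset.univ.filter (fun i => lam < xstar i)).card : ℝ)) := by
  obtain ⟨σ, hσ⟩ := exists_sortsDesc xstar
  set m := ∑ i, levelIndicator xstar lam i
  have hm_pos : 0 < m := by
    obtain ⟨j, hj⟩ := hlam
    refine sum_pos' (fun i _ => ?_) ⟨j, mem_univ j, ?_⟩
    · rw [levelIndicator_apply]
      split_ifs <;> norm_num
    · simp [levelIndicator_apply, hj]
  have hderiv : F (univ.filter fun i => lam ≤ xstar i) - F (univ.filter fun i => lam < xstar i)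
      + lam * m = 0 := by
    refine eq_zero_of_eventually_nonneg_mul_add_sq (a := m / 2) ?_
    filter_upwards [hσ.eventually_add_smul_levelIndicator (c := lam)] with ε hε
    have hmin := hxstar (xstar + ε • levelIndicator xstar lam)
    rw [hf _ σ hσ, hf _ σ hε, lovaszVal_add, lovaszVal_smul, lovaszVal_levelIndicator F hσ,
      sum_sq_add_smul_levelIndicator] at hmin
    linarith
  rw [← sum_levelIndicator, eq_div_iff hm_pos.ne']
  linarith

/-- value of a constant block of the proximal solution:
if `λ` is a value attained by a coordinate of the minimizer `x*` of
`f(x) + ½‖x‖²`, and `S' = {x* ≥ λ}`, `S = {x* > λ}`, then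
`λ = −(F(S') − F(S)) / (|S'| − |S|)`. -/
theorem statement13 {n : ℕ} (F : Finset (Fin n) → ℝ) (hF0 : F ∅ = 0) (hF : Submodular F)
    (f : (Fin n → ℝ) → ℝ) (hf : IsLovasz F f)
    (xstar : Fin n → ℝ)
    (hxstar : ∀ x : Fin n → ℝ,
      f xstar + (1/2) * ∑ i, (xstar i)^2 ≤ f x + (1/2) * ∑ i, (x i)^2)
    (lam : ℝ) (hlam : ∃ j, xstar j = lam) :
    lam = -(F (Finset.univ.filter (fun i => lam ≤ xstar i))
              - F (Finset.univ.filter (fun i => lam < xstar i))) /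
      (((Finset.univ.filter (fun i => lam ≤ xstar i)).card : ℝ)
        - ((Finset.univ.filter (fun i => lam < xstar i)).card : ℝ)) :=
  statement13_general F f hf xstar hxstar lam hlam
end

section
/- Let A and B be nonempty polyhedral convex subsets of ℝ^n, let z_0 ∈ ℝ^n, and define z_{k+1} = (1/2)(R_A R_B + id)(z_k) and x_k = Π_B(z_k). Then the sequences {x_k} and {Π_A Π_B z_k} are bounded, and every cluster point of the sequence {(Π_A R_B z_k, x_k)} as well as every cluster point of the sequence {(Π_A x_k, x_k)} is a pair (a, b) with a ∈ A, b ∈ B, and ‖a − b‖ = inf{‖u − v‖ : u ∈ A, v ∈ B}. -/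
open Filter

/-- A polyhedral convex set: an intersection of finitely many closed halfspaces. -/
def Polyhedral {n : ℕ} (C : Set (Fin n → ℝ)) : Prop :=
  ∃ (m : ℕ) (a : Fin m → Fin n → ℝ) (b : Fin m → ℝ),
    C = {x : Fin n → ℝ | ∀ i, ∑ j, a i j * x j ≤ b i}

/-- `P` is the (Euclidean) orthogonal projection onto `C`. -/
def IsEuclProjection {n : ℕ} (C : Set (Fin n → ℝ)) (P : (Fin n → ℝ) → (Fin n → ℝ)) : Prop :=
  ∀ x : Fin n → ℝ, P x ∈ C ∧ ∀ w ∈ C, ∑ i, (x i - P x i)^2 ≤ ∑ i, (x i - w i)^2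

open Topology Matrix
open scoped RealInnerProductSpace Pointwise

/-!
The difference `B - A` of two polyhedra is again a polyhedron (Fourier–Motzkin elimination), hence
closed, so it contains a vector `v = b - a` of least norm, with `a ∈ A` and `b ∈ B`. The variational
inequality for `v` shows that the points `y_k = a - k • v` form a Douglas–Rachford trajectory:
`Π_B y_k = b` and `Π_A R_B y_k = a`, so `y_k - y_{k+1} = v`. The Douglas–Rachford step averages the
nonexpansive map `R_A R_B` with the identity, hence is firmly nonexpansive, and comparing `z_k`
with `y_k` gives `‖z_{k+1} - y_{k+1}‖² + ‖(z_k - z_{k+1}) - v‖² ≤ ‖z_k - y_k‖²`. So `x_k` stays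
bounded and `z_k - z_{k+1} = x_k - Π_A R_B z_k → v`. Since `x_k - Π_A x_k ∈ B - A` is no longer
than `x_k - Π_A R_B z_k`, minimality of `v` forces `x_k - Π_A x_k → v` as well. Every cluster point
`(a', b')` of either pair sequence thus lies in `A × B` with `b' - a' = v`.
-/

section MetricProjection

variable {E : Type*} [NormedAddCommGroup E] [InnerProductSpace ℝ E]

def IsMetricProjection (K : Set E) (P : E → E) : Prop :=
  ∀ x, P x ∈ K ∧ ∀ w ∈ K, ‖x - P x‖ ≤ ‖x - w‖

lemma inner_sub_le_zero_of_forall_norm_sub_le {K : Set E} (hK : Convex ℝ K) {u v : E}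
    (hv : v ∈ K) (h : ∀ w ∈ K, ‖u - v‖ ≤ ‖u - w‖) {w : E} (hw : w ∈ K) :
    ⟪u - v, w - v⟫ ≤ 0 := by
  have : Nonempty K := ⟨⟨v, hv⟩⟩
  refine (norm_eq_iInf_iff_real_inner_le_zero hK hv).1
    (le_antisymm (le_ciInf fun w => h w w.2) ?_) w hw
  exact ciInf_le (f := fun w : K => ‖u - w‖) ⟨0, by rintro _ ⟨w, rfl⟩; exact norm_nonneg _⟩ ⟨v, hv⟩

namespace IsMetricProjection

variable {K : Set E} {P : E → E}

lemma inner_le_zero (hP : IsMetricProjection K P) (hK : Convex ℝ K) (x : E) {w : E}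
    (hw : w ∈ K) : ⟪x - P x, w - P x⟫ ≤ 0 :=
  inner_sub_le_zero_of_forall_norm_sub_le hK (hP x).1 (hP x).2 hw

lemma eq_of_inner_le_zero (hP : IsMetricProjection K P) {x q : E} (hq : q ∈ K)
    (h : ∀ w ∈ K, ⟪x - q, w - q⟫ ≤ 0) : P x = q := by
  have hsplit : ‖x - P x‖ ^ 2 = ‖x - q‖ ^ 2 - 2 * ⟪x - q, P x - q⟫ + ‖P x - q‖ ^ 2 := by
    rw [← norm_sub_sq_real]; congr 2; abel
  have hle : ‖x - P x‖ ^ 2 ≤ ‖x - q‖ ^ 2 := by gcongr; exact (hP x).2 q hq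
  have : ‖P x - q‖ ^ 2 ≤ 0 := by linarith [h (P x) (hP x).1]
  exact sub_eq_zero.1 (norm_eq_zero.1 (by nlinarith [norm_nonneg (P x - q)]))

lemma norm_sq_sub_le_inner (hP : IsMetricProjection K P) (hK : Convex ℝ K) (x y : E) :
    ‖P x - P y‖ ^ 2 ≤ ⟪P x - P y, x - y⟫ := by
  have hx := hP.inner_le_zero hK x (hP y).1
  have hy := hP.inner_le_zero hK y (hP x).1
  have : ⟪P x - P y, x - y⟫ - ‖P x - P y‖ ^ 2
      = -⟪x - P x, P y - P x⟫ - ⟪y - P y, P x - P y⟫ := by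
    rw [← real_inner_self_eq_norm_sq]
    simp only [inner_sub_left, inner_sub_right, real_inner_comm]
    ring
  linarith

lemma norm_sub_le (hP : IsMetricProjection K P) (hK : Convex ℝ K) (x y : E) :
    ‖P x - P y‖ ≤ ‖x - y‖ := by
  have h := hP.norm_sq_sub_le_inner hK x y
  have := real_inner_le_norm (P x - P y) (x - y)
  nlinarith [norm_nonneg (P x - P y), norm_nonneg (x - y)]

end IsMetricProjection

def reflectionOf (P : E → E) (x : E) : E := (2 : ℝ) • P x - x

lemma IsMetricProjection.norm_reflectionOf_sub_le {K : Set E} {P : E → E}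
    (hP : IsMetricProjection K P) (hK : Convex ℝ K) (x y : E) :
    ‖reflectionOf P x - reflectionOf P y‖ ≤ ‖x - y‖ := by
  have h := hP.norm_sq_sub_le_inner hK x y
  have hid : reflectionOf P x - reflectionOf P y = (2 : ℝ) • (P x - P y) - (x - y) := by
    simp only [reflectionOf]; module
  refine (pow_le_pow_iff_left₀ (norm_nonneg _) (norm_nonneg _) two_ne_zero).1 ?_
  rw [hid, norm_sub_sq_real, norm_smul, inner_smul_left]
  norm_num
  nlinarith

lemma norm_sq_average_sub_add_le {T : E → E}
    (hT : ∀ x y, ‖T x - T y‖ ≤ ‖x - y‖) (x y : E) :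
    ‖(1 / 2 : ℝ) • (T x + x) - (1 / 2 : ℝ) • (T y + y)‖ ^ 2
      + ‖(x - (1 / 2 : ℝ) • (T x + x)) - (y - (1 / 2 : ℝ) • (T y + y))‖ ^ 2 ≤ ‖x - y‖ ^ 2 := by
  have hpar := parallelogram_law_with_norm ℝ (x - y) (T x - T y)
  have h1 : (1 / 2 : ℝ) • (T x + x) - (1 / 2 : ℝ) • (T y + y)
      = (1 / 2 : ℝ) • ((x - y) + (T x - T y)) := by module
  have h2 : (x - (1 / 2 : ℝ) • (T x + x)) - (y - (1 / 2 : ℝ) • (T y + y))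
      = (1 / 2 : ℝ) • ((x - y) - (T x - T y)) := by module
  rw [h1, h2, norm_smul, norm_smul, mul_pow, mul_pow]
  have := pow_le_pow_left₀ (norm_nonneg _) (hT x y) 2
  norm_num
  nlinarith

end MetricProjection

lemma tendsto_of_tendsto_norm_sub_sq {E : Type*} [SeminormedAddCommGroup E] {f : ℕ → E} {v : E}
    (h : Tendsto (fun k => ‖f k - v‖ ^ 2) atTop (𝓝 0)) : Tendsto f atTop (𝓝 v) := by
  rw [tendsto_iff_norm_sub_tendsto_zero]
  simpa [Real.sqrt_sq (norm_nonneg _)] using h.sqrt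

lemma tendsto_atTop_zero_of_add_le {s t : ℕ → ℝ} (hs : ∀ k, 0 ≤ s k) (ht : ∀ k, 0 ≤ t k)
    (h : ∀ k, s (k + 1) + t k ≤ s k) : Tendsto t atTop (𝓝 0) := by
  have hsum : ∀ N, ∑ k ∈ Finset.range N, t k + s N ≤ s 0 := by
    intro N
    induction N with
    | zero => simp
    | succ N ih => rw [Finset.sum_range_succ]; linarith [h N]
  exact (summable_of_sum_range_le ht fun N => by linarith [hsum N, hs N]).tendsto_atTop_zero

section BestApproxPair

variable {E : Type*} [NormedAddCommGroup E]

structure IsBestApproxPair (A B : Set E) (a b : E) : Prop where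
  mem_left : a ∈ A
  mem_right : b ∈ B
  norm_sub_le : ∀ u ∈ A, ∀ w ∈ B, ‖b - a‖ ≤ ‖w - u‖

lemma exists_isBestApproxPair [ProperSpace E] {A B : Set E} (hA : A.Nonempty) (hB : B.Nonempty)
    (hBA : IsClosed (B - A)) : ∃ a b, IsBestApproxPair A B a b := by
  obtain ⟨_, ⟨b, hb, a, ha, rfl⟩, hmin⟩ := hBA.exists_infDist_eq_dist (hB.sub hA) 0
  refine ⟨a, b, ha, hb, fun u hu w hw => ?_⟩
  have := Metric.infDist_le_dist_of_mem (x := 0) (Set.sub_mem_sub hw hu)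
  rwa [hmin, dist_zero_left, dist_zero_left] at this

lemma IsBestApproxPair.of_mapClusterPt {ι : Type*} {l : Filter ι} {A B : Set E} {a b : E}
    (hab : IsBestApproxPair A B a b) (hA : IsClosed A) (hB : IsClosed B) {g : ι → E × E}
    (hg : ∀ k, g k ∈ A ×ˢ B) (hlim : Tendsto (fun k => (g k).2 - (g k).1) l (𝓝 (b - a)))
    {p : E × E} (hp : MapClusterPt p l g) : IsBestApproxPair A B p.1 p.2 := by
  obtain ⟨hpA, hpB⟩ : p ∈ A ×ˢ B := (hA.prod hB).mem_of_mapClusterPt hp (Eventually.of_forall hg)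
  have hsub : MapClusterPt (p.2 - p.1) l fun k => (g k).2 - (g k).1 :=
    hp.continuousAt_comp (f := fun q : E × E => q.2 - q.1) (by fun_prop)
  have : p.2 - p.1 = b - a := eq_of_nhds_neBot (hsub.clusterPt.mono hlim)
  exact ⟨hpA, hpB, fun u hu w hw => this ▸ hab.norm_sub_le u hu w hw⟩

end BestApproxPair

section DouglasRachford

variable {E : Type*} [NormedAddCommGroup E] [InnerProductSpace ℝ E]

noncomputable def douglasRachford (PA PB : E → E) (z : E) : E :=
  (1 / 2 : ℝ) • (reflectionOf PA (reflectionOf PB z) + z)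

lemma sub_douglasRachford (PA PB : E → E) (z : E) :
    z - douglasRachford PA PB z = PB z - PA (reflectionOf PB z) := by
  simp only [douglasRachford, reflectionOf]; module

variable {A B : Set E} {PA PB : E → E} {a b : E}

lemma norm_sq_douglasRachford_sub_add_le (hA : Convex ℝ A) (hB : Convex ℝ B)
    (hPA : IsMetricProjection A PA) (hPB : IsMetricProjection B PB) (x y : E) :
    ‖douglasRachford PA PB x - douglasRachford PA PB y‖ ^ 2
      + ‖(x - douglasRachford PA PB x) - (y - douglasRachford PA PB y)‖ ^ 2 ≤ ‖x - y‖ ^ 2 :=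
  norm_sq_average_sub_add_le (T := fun x => reflectionOf PA (reflectionOf PB x))
    (fun x y => (hPA.norm_reflectionOf_sub_le hA _ _).trans (hPB.norm_reflectionOf_sub_le hB x y))
    x y

namespace IsBestApproxPair

lemma norm_sq_le_inner (hab : IsBestApproxPair A B a b) (hA : Convex ℝ A) (hB : Convex ℝ B)
    {c : E} (hc : c ∈ B - A) : ‖b - a‖ ^ 2 ≤ ⟪b - a, c⟫ := by
  have hv : b - a ∈ B - A := Set.sub_mem_sub hab.mem_right hab.mem_left
  have hmin : ∀ w ∈ B - A, ‖0 - (b - a)‖ ≤ ‖0 - w‖ := by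
    rintro _ ⟨w, hw, u, hu, rfl⟩
    simpa only [zero_sub, norm_neg] using hab.norm_sub_le u hu w hw
  have := inner_sub_le_zero_of_forall_norm_sub_le (hB.sub hA) hv hmin hc
  rw [zero_sub, inner_neg_left, inner_sub_right, real_inner_self_eq_norm_sq] at this
  linarith

lemma norm_sub_sq_le (hab : IsBestApproxPair A B a b) (hA : Convex ℝ A) (hB : Convex ℝ B)
    {c : E} (hc : c ∈ B - A) : ‖c - (b - a)‖ ^ 2 ≤ ‖c‖ ^ 2 - ‖b - a‖ ^ 2 := by
  rw [norm_sub_sq_real, real_inner_comm]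
  linarith [hab.norm_sq_le_inner hA hB hc]

lemma proj_sub_smul_eq (hab : IsBestApproxPair A B a b) (hA : Convex ℝ A) (hB : Convex ℝ B)
    (hPA : IsMetricProjection A PA) (hPB : IsMetricProjection B PB) {t : ℝ} (ht : 0 ≤ t) :
    PB (a - t • (b - a)) = b ∧ PA (reflectionOf PB (a - t • (b - a))) = a := by
  have hPBy : PB (a - t • (b - a)) = b := by
    refine hPB.eq_of_inner_le_zero hab.mem_right fun w hw => ?_
    have := hab.norm_sq_le_inner hA hB (Set.sub_mem_sub hw hab.mem_left)
    have hw' : w - a = (w - b) + (b - a) := by abel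
    rw [hw', inner_add_right, real_inner_self_eq_norm_sq] at this
    rw [show a - t • (b - a) - b = -(1 + t) • (b - a) by module, inner_smul_left]
    simp only [conj_trivial]
    nlinarith
  refine ⟨hPBy, hPA.eq_of_inner_le_zero hab.mem_left fun u hu => ?_⟩
  have := hab.norm_sq_le_inner hA hB (Set.sub_mem_sub hab.mem_right hu)
  have hu' : b - u = (b - a) - (u - a) := by abel
  rw [hu', inner_sub_right, real_inner_self_eq_norm_sq] at this
  rw [reflectionOf, hPBy, show (2 : ℝ) • b - (a - t • (b - a)) - a = (2 + t) • (b - a) by module,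
    inner_smul_left]
  simp only [conj_trivial]
  nlinarith

lemma douglasRachford_sub_smul (hab : IsBestApproxPair A B a b) (hA : Convex ℝ A) (hB : Convex ℝ B)
    (hPA : IsMetricProjection A PA) (hPB : IsMetricProjection B PB) {t : ℝ} (ht : 0 ≤ t) :
    douglasRachford PA PB (a - t • (b - a)) = a - (t + 1) • (b - a) := by
  obtain ⟨hPBy, hPAy⟩ := hab.proj_sub_smul_eq hA hB hPA hPB ht
  rw [douglasRachford, reflectionOf, hPAy, reflectionOf, hPBy]
  module

variable {z : ℕ → E}

lemma norm_sq_sub_succ_add_le (hab : IsBestApproxPair A B a b) (hA : Convex ℝ A)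
    (hB : Convex ℝ B) (hPA : IsMetricProjection A PA) (hPB : IsMetricProjection B PB)
    (hz : ∀ k, z (k + 1) = douglasRachford PA PB (z k)) (k : ℕ) :
    ‖z (k + 1) - (a - ((k + 1 : ℕ) : ℝ) • (b - a))‖ ^ 2
      + ‖(PB (z k) - PA (reflectionOf PB (z k))) - (b - a)‖ ^ 2
      ≤ ‖z k - (a - (k : ℝ) • (b - a))‖ ^ 2 := by
  have hy := hab.douglasRachford_sub_smul hA hB hPA hPB (Nat.cast_nonneg (α := ℝ) k)
  have h := norm_sq_douglasRachford_sub_add_le hA hB hPA hPB (z k) (a - (k : ℝ) • (b - a))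
  have hv : a - (k : ℝ) • (b - a) - (a - ((k : ℝ) + 1) • (b - a)) = b - a := by module
  rw [Nat.cast_succ]
  rwa [sub_douglasRachford, hy, ← hz, hv] at h

lemma norm_proj_sub_le (hab : IsBestApproxPair A B a b) (hA : Convex ℝ A)
    (hB : Convex ℝ B) (hPA : IsMetricProjection A PA) (hPB : IsMetricProjection B PB)
    (hz : ∀ k, z (k + 1) = douglasRachford PA PB (z k)) (k : ℕ) : ‖PB (z k) - b‖ ≤ ‖z 0 - a‖ := by
  set s : ℕ → ℝ := fun k => ‖z k - (a - (k : ℝ) • (b - a))‖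
  have hs : Antitone s := antitone_nat_of_succ_le fun k => by
    have := hab.norm_sq_sub_succ_add_le hA hB hPA hPB hz k
    refine (pow_le_pow_iff_left₀ (norm_nonneg _) (norm_nonneg _) two_ne_zero).1 ?_
    nlinarith [norm_nonneg (PB (z k) - PA (reflectionOf PB (z k)) - (b - a))]
  calc ‖PB (z k) - b‖ = ‖PB (z k) - PB (a - (k : ℝ) • (b - a))‖ := by
        rw [(hab.proj_sub_smul_eq hA hB hPA hPB (Nat.cast_nonneg k)).1]
    _ ≤ s k := hPB.norm_sub_le hB _ _
    _ ≤ s 0 := hs (Nat.zero_le k)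
    _ = ‖z 0 - a‖ := by simp [s]

lemma norm_proj_le (hab : IsBestApproxPair A B a b) (hA : Convex ℝ A)
    (hB : Convex ℝ B) (hPA : IsMetricProjection A PA) (hPB : IsMetricProjection B PB)
    (hz : ∀ k, z (k + 1) = douglasRachford PA PB (z k)) (k : ℕ) : ‖PB (z k)‖ ≤ ‖b‖ + ‖z 0 - a‖ :=
  (norm_le_insert' _ b).trans (by gcongr; exact hab.norm_proj_sub_le hA hB hPA hPB hz k)

lemma norm_proj_proj_le (hab : IsBestApproxPair A B a b) (hA : Convex ℝ A)
    (hB : Convex ℝ B) (hPA : IsMetricProjection A PA) (hPB : IsMetricProjection B PB)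
    (hz : ∀ k, z (k + 1) = douglasRachford PA PB (z k)) (k : ℕ) :
    ‖PA (PB (z k))‖ ≤ ‖PA b‖ + ‖z 0 - a‖ :=
  (norm_le_insert' _ (PA b)).trans
    (by gcongr; exact (hPA.norm_sub_le hA _ _).trans (hab.norm_proj_sub_le hA hB hPA hPB hz k))

lemma tendsto_proj_sub_proj_reflectionOf (hab : IsBestApproxPair A B a b) (hA : Convex ℝ A)
    (hB : Convex ℝ B) (hPA : IsMetricProjection A PA) (hPB : IsMetricProjection B PB)
    (hz : ∀ k, z (k + 1) = douglasRachford PA PB (z k)) :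
    Tendsto (fun k => PB (z k) - PA (reflectionOf PB (z k))) atTop (𝓝 (b - a)) := by
  refine tendsto_of_tendsto_norm_sub_sq (tendsto_atTop_zero_of_add_le
    (s := fun k => ‖z k - (a - (k : ℝ) • (b - a))‖ ^ 2) (fun k => sq_nonneg _)
    (fun k => sq_nonneg _) (hab.norm_sq_sub_succ_add_le hA hB hPA hPB hz))

lemma tendsto_of_norm_le (hab : IsBestApproxPair A B a b) (hA : Convex ℝ A) (hB : Convex ℝ B)
    {c d : ℕ → E} (hc : ∀ k, c k ∈ B - A) (hcd : ∀ k, ‖c k‖ ≤ ‖d k‖)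
    (hd : Tendsto d atTop (𝓝 (b - a))) : Tendsto c atTop (𝓝 (b - a)) := by
  refine tendsto_of_tendsto_norm_sub_sq (squeeze_zero (fun k => sq_nonneg _) (fun k => ?_)
    (g := fun k => ‖d k‖ ^ 2 - ‖b - a‖ ^ 2) ?_)
  · have := pow_le_pow_left₀ (norm_nonneg _) (hcd k) 2
    linarith [hab.norm_sub_sq_le hA hB (hc k)]
  · have := (hd.norm.pow 2).sub_const (‖b - a‖ ^ 2)
    rwa [sub_self] at this

lemma tendsto_proj_sub_proj_proj (hab : IsBestApproxPair A B a b) (hA : Convex ℝ A)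
    (hB : Convex ℝ B) (hPA : IsMetricProjection A PA) (hPB : IsMetricProjection B PB)
    (hz : ∀ k, z (k + 1) = douglasRachford PA PB (z k)) :
    Tendsto (fun k => PB (z k) - PA (PB (z k))) atTop (𝓝 (b - a)) :=
  hab.tendsto_of_norm_le hA hB (fun _ => Set.sub_mem_sub (hPB _).1 (hPA _).1)
    (fun _ => (hPA _).2 _ (hPA _).1) (hab.tendsto_proj_sub_proj_reflectionOf hA hB hPA hPB hz)

end IsBestApproxPair

lemma exists_forall_mul_le_iff {ι : Type*} [Fintype ι] (c r : ι → ℝ) :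
    (∃ t, ∀ i, c i * t ≤ r i) ↔
      (∀ i, c i = 0 → 0 ≤ r i) ∧ ∀ i j, c i < 0 → 0 < c j → c i * r j ≤ c j * r i := by
  classical
  constructor
  · rintro ⟨t, ht⟩
    refine ⟨fun i hi => by simpa [hi] using ht i, fun i j hi hj => ?_⟩
    nlinarith [ht i, ht j]
  rintro ⟨hzero, hpair⟩
  -- `T` lies below every `r j / c j` with `0 < c j`; it is the witness when no `c i` is negative.
  set T : ℝ := -∑ j, |r j| / |c j|
  set L := insert T ((Finset.univ.filter fun i => c i < 0).image fun i => r i / c i)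
  have hL : L.Nonempty := Finset.insert_nonempty _ _
  refine ⟨L.max' hL, fun i => ?_⟩
  rcases lt_trichotomy (c i) 0 with hi | hi | hi
  · have : r i / c i ≤ L.max' hL :=
      L.le_max' _ (Finset.mem_insert_of_mem (Finset.mem_image_of_mem _ (by simpa using hi)))
    calc c i * L.max' hL ≤ c i * (r i / c i) := mul_le_mul_of_nonpos_left this hi.le
      _ = r i := mul_div_cancel₀ _ hi.ne
  · simpa [hi] using hzero i hi
  · have : L.max' hL ≤ r i / c i := by
      refine L.max'_le _ _ fun x hx => ?_
      simp only [L, Finset.mem_insert, Finset.mem_image, Finset.mem_filter] at hx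
      rcases hx with rfl | ⟨j, ⟨-, hj⟩, rfl⟩
      · have h1 : |r i| / |c i| ≤ ∑ j, |r j| / |c j| :=
          Finset.single_le_sum (f := fun j => |r j| / |c j|) (fun j _ => by positivity)
            (Finset.mem_univ i)
        rw [abs_of_pos hi] at h1
        have h2 : -|r i| / c i ≤ r i / c i := by gcongr; exact neg_abs_le _
        rw [neg_div] at h2
        linarith
      · rw [div_le_iff_of_neg hj, div_mul_eq_mul_div, div_le_iff₀ hi]
        linarith [hpair j i hj hi]
    calc c i * L.max' hL ≤ c i * (r i / c i) := mul_le_mul_of_nonneg_left this hi.le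
      _ = r i := mul_div_cancel₀ _ hi.ne'

namespace Polyhedral

variable {n k : ℕ}

lemma of_fintype {ι : Type*} [Fintype ι] (a : ι → Fin n → ℝ) (b : ι → ℝ) :
    Polyhedral {x : Fin n → ℝ | ∀ i, a i ⬝ᵥ x ≤ b i} := by
  let e := Fintype.equivFin ι
  refine ⟨Fintype.card ι, fun i => a (e.symm i), fun i => b (e.symm i), ?_⟩
  ext x
  exact e.symm.forall_congr_right.symm

lemma convex {C : Set (Fin n → ℝ)} (hC : Polyhedral C) : Convex ℝ C := by
  obtain ⟨m, a, b, rfl⟩ := hC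
  simp only [Set.ofPred_forall]
  exact convex_iInter fun i => convex_halfSpace_le (dotProductBilin ℝ ℝ (a i)).isLinear (b i)

lemma isClosed {C : Set (Fin n → ℝ)} (hC : Polyhedral C) : IsClosed C := by
  obtain ⟨m, a, b, rfl⟩ := hC
  simp only [Set.ofPred_forall]
  exact isClosed_iInter fun i => isClosed_le (by fun_prop) continuous_const

lemma inter {C D : Set (Fin n → ℝ)} (hC : Polyhedral C) (hD : Polyhedral D) :
    Polyhedral (C ∩ D) := by
  obtain ⟨m, a, b, rfl⟩ := hC
  obtain ⟨m', a', b', rfl⟩ := hD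
  convert of_fintype (Sum.elim a a') (Sum.elim b b') using 1
  ext x
  simp [Sum.forall, dotProduct]

lemma preimage_linearMap {C : Set (Fin n → ℝ)} (hC : Polyhedral C)
    (f : (Fin k → ℝ) →ₗ[ℝ] Fin n → ℝ) : Polyhedral (f ⁻¹' C) := by
  obtain ⟨m, a, b, rfl⟩ := hC
  refine ⟨m, fun i => a i ᵥ* LinearMap.toMatrix' f, b, ?_⟩
  ext x
  change (∀ i, a i ⬝ᵥ f x ≤ b i) ↔ ∀ i, (a i ᵥ* LinearMap.toMatrix' f) ⬝ᵥ x ≤ b i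
  simp only [← dotProduct_mulVec, LinearMap.toMatrix'_mulVec]

/-- Fourier–Motzkin elimination of the last coordinate. -/
lemma exists_snoc {P : Set (Fin (k + 1) → ℝ)} (hP : Polyhedral P) :
    Polyhedral {x : Fin k → ℝ | ∃ t, Fin.snoc x t ∈ P} := by
  classical
  obtain ⟨m, a, b, rfl⟩ := hP
  set c : Fin m → ℝ := fun i => a i (Fin.last k)
  set a' : Fin m → Fin k → ℝ := fun i => Fin.init (a i)
  have hsnoc : ∀ x t i,
      ∑ j, a i j * (Fin.snoc x t : Fin (k + 1) → ℝ) j = a' i ⬝ᵥ x + c i * t := by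
    intro x t i
    simp [Fin.sum_univ_castSucc, a', c, dotProduct, Fin.init]
  convert of_fintype (ι := {i // c i = 0} ⊕ {p : Fin m × Fin m // c p.1 < 0 ∧ 0 < c p.2})
    (Sum.elim (fun i => a' i) fun p => c p.1.2 • a' p.1.1 - c p.1.1 • a' p.1.2)
    (Sum.elim (fun i => b i) fun p => c p.1.2 * b p.1.1 - c p.1.1 * b p.1.2) using 1
  ext x
  have hfm := exists_forall_mul_le_iff c fun i => b i - a' i ⬝ᵥ x
  simp only [Set.mem_ofPred_eq, hsnoc, ← le_sub_iff_add_le'] at hfm ⊢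
  rw [hfm]
  simp only [Sum.forall, Subtype.forall, Prod.forall, Sum.elim_inl, Sum.elim_inr, sub_dotProduct,
    smul_dotProduct, smul_eq_mul]
  refine and_congr (forall₂_congr fun i _ => sub_nonneg)
    (forall_congr' fun i => forall_congr' fun j => ?_)
  exact ⟨fun h hij => by linarith [h hij.1 hij.2], fun h hi hj => by linarith [h ⟨hi, hj⟩]⟩

lemma exists_append {l : ℕ} {P : Set (Fin (k + l) → ℝ)} (hP : Polyhedral P) :
    Polyhedral {x : Fin k → ℝ | ∃ y : Fin l → ℝ, Fin.append x y ∈ P} := by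
  induction l with
  | zero =>
    have h : {x : Fin k → ℝ | ∃ y : Fin 0 → ℝ, Fin.append x y ∈ P} = P := by
      ext x
      simp only [Set.mem_ofPred_eq, Unique.exists_iff]
      rw [Fin.append_right_nil _ _ rfl]
      rfl
    rwa [h]
  | succ l ih =>
    convert ih hP.exists_snoc using 1
    ext x
    refine ⟨fun ⟨y, hy⟩ => ⟨Fin.init y, y (Fin.last l), ?_⟩, fun ⟨y, t, hyt⟩ => ⟨Fin.snoc y t, ?_⟩⟩
    · rwa [← Fin.append_snoc, Fin.snoc_init_self]
    · rwa [Fin.append_snoc]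

/-- `A - B` is the image of `{(d, u) | u ∈ B, d + u ∈ A} ⊆ ℝⁿ × ℝⁿ` under the first projection. -/
lemma sub {A B : Set (Fin n → ℝ)} (hA : Polyhedral A) (hB : Polyhedral B) :
    Polyhedral (A - B) := by
  let left : (Fin (n + n) → ℝ) →ₗ[ℝ] Fin n → ℝ := LinearMap.funLeft ℝ ℝ (Fin.castAdd n)
  let right : (Fin (n + n) → ℝ) →ₗ[ℝ] Fin n → ℝ := LinearMap.funLeft ℝ ℝ (Fin.natAdd n)
  convert exists_append ((hB.preimage_linearMap right).inter
    (hA.preimage_linearMap (left + right))) using 1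
  ext d
  simp only [Set.mem_sub, Set.mem_ofPred_eq, Set.mem_inter_iff, Set.mem_preimage]
  have hleft : ∀ y, left (Fin.append d y) = d := fun y => funext fun j => Fin.append_left d y j
  have hright : ∀ y, right (Fin.append d y) = y := fun y => funext fun j => Fin.append_right d y j
  simp only [LinearMap.add_apply, hleft, hright]
  constructor
  · rintro ⟨w, hw, u, hu, rfl⟩
    exact ⟨u, hu, by rwa [sub_add_cancel]⟩
  · rintro ⟨u, hu, hw⟩
    exact ⟨d + u, hw, u, hu, add_sub_cancel_right d u⟩

end Polyhedral

/-- `Fin n → ℝ` carries the sup norm, so the argument runs in `EuclideanSpace ℝ (Fin n)`. -/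
noncomputable abbrev toEuclideanSpace (n : ℕ) : (Fin n → ℝ) ≃L[ℝ] EuclideanSpace ℝ (Fin n) :=
  (EuclideanSpace.equiv (Fin n) ℝ).symm

lemma norm_toEuclideanSpace {n : ℕ} (x : Fin n → ℝ) :
    ‖toEuclideanSpace n x‖ = √(∑ i, x i ^ 2) := by
  simp [EuclideanSpace.norm_eq]

lemma norm_toEuclideanSpace_sub_sq {n : ℕ} (x y : Fin n → ℝ) :
    ‖toEuclideanSpace n x - toEuclideanSpace n y‖ ^ 2 = ∑ i, (x i - y i) ^ 2 := by
  rw [← map_sub, norm_toEuclideanSpace, Real.sq_sqrt (by positivity)]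
  rfl

lemma IsEuclProjection.isMetricProjection_image {n : ℕ} {C : Set (Fin n → ℝ)}
    {P : (Fin n → ℝ) → Fin n → ℝ} (hP : IsEuclProjection C P) :
    IsMetricProjection (toEuclideanSpace n '' C)
      fun x => toEuclideanSpace n (P ((toEuclideanSpace n).symm x)) := by
  intro x
  obtain ⟨x, rfl⟩ := (toEuclideanSpace n).surjective x
  refine ⟨Set.mem_image_of_mem _ (hP x).1, ?_⟩
  rintro _ ⟨w, hw, rfl⟩
  dsimp only
  rw [ContinuousLinearEquiv.symm_apply_apply,
    ← pow_le_pow_iff_left₀ (norm_nonneg _) (norm_nonneg _) two_ne_zero,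
    norm_toEuclideanSpace_sub_sq, norm_toEuclideanSpace_sub_sq]
  exact (hP x).2 w hw

lemma Polyhedral.exists_isBestApproxPair_image {n : ℕ} {A B : Set (Fin n → ℝ)}
    (hA : Polyhedral A) (hB : Polyhedral B) (hAne : A.Nonempty) (hBne : B.Nonempty) :
    ∃ a b, IsBestApproxPair (toEuclideanSpace n '' A) (toEuclideanSpace n '' B) a b := by
  refine exists_isBestApproxPair (hAne.image _) (hBne.image _) ?_
  rw [← Set.image_sub]
  exact (toEuclideanSpace n).toHomeomorph.isClosedMap _ (hB.sub hA).isClosed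

lemma IsBestApproxPair.of_image {n : ℕ} {A B : Set (Fin n → ℝ)} {x y : Fin n → ℝ}
    (h : IsBestApproxPair (toEuclideanSpace n '' A) (toEuclideanSpace n '' B)
      (toEuclideanSpace n x) (toEuclideanSpace n y)) :
    x ∈ A ∧ y ∈ B ∧ ∀ u ∈ A, ∀ v ∈ B, ∑ i, (x i - y i) ^ 2 ≤ ∑ i, (u i - v i) ^ 2 := by
  refine ⟨(toEuclideanSpace n).injective.mem_set_image.1 h.mem_left,
    (toEuclideanSpace n).injective.mem_set_image.1 h.mem_right, fun u hu v hv => ?_⟩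
  have := h.norm_sub_le _ (Set.mem_image_of_mem _ hu) _ (Set.mem_image_of_mem _ hv)
  rw [norm_sub_rev, norm_sub_rev (toEuclideanSpace n v)] at this
  rw [← norm_toEuclideanSpace_sub_sq, ← norm_toEuclideanSpace_sub_sq]
  gcongr

lemma Polyhedral.convex_image {n : ℕ} {C : Set (Fin n → ℝ)} (hC : Polyhedral C) :
    Convex ℝ (toEuclideanSpace n '' C) :=
  hC.convex.linear_image (toEuclideanSpace n).toLinearMap

lemma Polyhedral.isClosed_image {n : ℕ} {C : Set (Fin n → ℝ)} (hC : Polyhedral C) :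
    IsClosed (toEuclideanSpace n '' C) :=
  (toEuclideanSpace n).toHomeomorph.isClosedMap _ hC.isClosed

lemma IsBestApproxPair.of_mapClusterPt_image {n : ℕ} {A B : Set (Fin n → ℝ)}
    {a b : EuclideanSpace ℝ (Fin n)}
    (hab : IsBestApproxPair (toEuclideanSpace n '' A) (toEuclideanSpace n '' B) a b)
    (hA : Polyhedral A) (hB : Polyhedral B) {g : ℕ → (Fin n → ℝ) × (Fin n → ℝ)}
    (hg : ∀ k, g k ∈ A ×ˢ B)
    (hlim : Tendsto (fun k => toEuclideanSpace n (g k).2 - toEuclideanSpace n (g k).1) atTop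
      (𝓝 (b - a)))
    {p : (Fin n → ℝ) × (Fin n → ℝ)} (hp : MapClusterPt p atTop g) :
    p.1 ∈ A ∧ p.2 ∈ B ∧ ∀ u ∈ A, ∀ v ∈ B, ∑ i, (p.1 i - p.2 i) ^ 2 ≤ ∑ i, (u i - v i) ^ 2 :=
  IsBestApproxPair.of_image (x := p.1) (y := p.2) <| hab.of_mapClusterPt hA.isClosed_image
    hB.isClosed_image (g := Prod.map (toEuclideanSpace n) (toEuclideanSpace n) ∘ g)
    (fun k => ⟨Set.mem_image_of_mem _ (hg k).1, Set.mem_image_of_mem _ (hg k).2⟩) hlim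
    (hp.continuousAt_comp (f := Prod.map (toEuclideanSpace n) (toEuclideanSpace n)) (by fun_prop))

/-- Theorem 1, after Bauschke–Combettes–Luke: for nonempty
polyhedral `A, B ⊆ ℝ^n`, Douglas–Rachford iterates `z_{k+1} = ½(R_A R_B + id)(z_k)`
and `x_k = Π_B(z_k)` produce bounded sequences `{x_k}` and `{Π_A Π_B z_k}`, and
every cluster point of `{(Π_A R_B z_k, x_k)}` or of `{(Π_A x_k, x_k)}` is a pair
`(a, b) ∈ A × B` attaining `inf{‖u − v‖ : u ∈ A, v ∈ B}`. -/
theorem statement17 {n : ℕ} (A B : Set (Fin n → ℝ))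
    (hApoly : Polyhedral A) (hBpoly : Polyhedral B)
    (hAne : A.Nonempty) (hBne : B.Nonempty)
    (PA PB : (Fin n → ℝ) → (Fin n → ℝ))
    (hPA : IsEuclProjection A PA) (hPB : IsEuclProjection B PB)
    (z : ℕ → Fin n → ℝ)
    (hz : ∀ k, z (k+1) = (1/2 : ℝ) •
      ((((2:ℝ) • PA ((2:ℝ) • PB (z k) - z k) - ((2:ℝ) • PB (z k) - z k))) + z k)) :
    (∃ M : ℝ, ∀ k, Real.sqrt (∑ i, (PB (z k) i)^2) ≤ M) ∧
    (∃ M : ℝ, ∀ k, Real.sqrt (∑ i, (PA (PB (z k)) i)^2) ≤ M) ∧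
    ∀ p : (Fin n → ℝ) × (Fin n → ℝ),
      (MapClusterPt p atTop (fun k => (PA ((2:ℝ) • PB (z k) - z k), PB (z k))) ∨
       MapClusterPt p atTop (fun k => (PA (PB (z k)), PB (z k)))) →
      p.1 ∈ A ∧ p.2 ∈ B ∧
        ∀ u ∈ A, ∀ v ∈ B, ∑ i, (p.1 i - p.2 i)^2 ≤ ∑ i, (u i - v i)^2 := by
  set e := toEuclideanSpace n
  obtain ⟨a, b, hab⟩ := hApoly.exists_isBestApproxPair_image hBpoly hAne hBne
  have hA := hApoly.convex_image
  have hB := hBpoly.convex_image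
  let PA' x := e (PA (e.symm x))
  let PB' x := e (PB (e.symm x))
  have hPA' : IsMetricProjection _ PA' := hPA.isMetricProjection_image
  have hPB' : IsMetricProjection _ PB' := hPB.isMetricProjection_image
  let z' k := e (z k)
  have hz' : ∀ k, z' (k + 1) = douglasRachford PA' PB' (z' k) := fun k => by
    simp [z', PA', PB', hz, douglasRachford, reflectionOf]
  refine ⟨⟨‖b‖ + ‖e (z 0) - a‖, fun k => ?_⟩, ⟨‖PA' b‖ + ‖e (z 0) - a‖, fun k => ?_⟩,
    fun p hp => ?_⟩
  · have hPBe : PB' (e (z k)) = e (PB (z k)) := by simp [PB']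
    rw [← norm_toEuclideanSpace, ← hPBe]
    exact hab.norm_proj_le hA hB hPA' hPB' hz' k
  · have hPAe : PA' (PB' (e (z k))) = e (PA (PB (z k))) := by simp [PA', PB']
    rw [← norm_toEuclideanSpace, ← hPAe]
    exact hab.norm_proj_proj_le hA hB hPA' hPB' hz' k
  rcases hp with hp | hp
  · refine hab.of_mapClusterPt_image hApoly hBpoly (fun k => ⟨(hPA _).1, (hPB _).1⟩) ?_ hp
    convert hab.tendsto_proj_sub_proj_reflectionOf hA hB hPA' hPB' hz' using 2
    simp [PA', PB', z', reflectionOf]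
    rfl
  · refine hab.of_mapClusterPt_image hApoly hBpoly (fun k => ⟨(hPA _).1, (hPB _).1⟩) ?_ hp
    convert hab.tendsto_proj_sub_proj_proj hA hB hPA' hPB' hz' using 2
    simp [PA', PB', z']
    rfl
end DouglasRachford
end
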